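/- Let C be a K-linear abelian category and E an object admitting two monomorphisms ι1, ι2: E' → E from a simple object E' of C such that ι2 is not a scalar multiple of ι1 and E has length 2 with both composition factors isomorphic to E'. Then ι1 ⊕ ι2 : E' ⊕ E' → E is an isomorphism. -/
import Mathlib

open CategoryTheory CategoryTheory.Limits

section
variable {C : Type*} [Category C] [Abelian C] {K : Type*} [Field K] [Linear K C]

private lemma aux_smul_id_eq {X : C} {x : K} (hx : x = 1) : x • 𝟙 X = 𝟙 X := by
  rw [hx, one_smul]

private lemma aux_smul_id_zero {X : C} {x : K} (hx : x = 0) : x • 𝟙 X = 0 := by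
  rw [hx, zero_smul]

/-- A 2×2 scalar matrix with nonzero determinant gives an iso `X ⊞ X ⟶ X ⊞ X`. -/
lemma aux_matrix_iso (X : C) (a b c e : K) (h : a * e - b * c ≠ 0) :
    IsIso (biprod.desc (biprod.lift (a • 𝟙 X) (b • 𝟙 X))
      (biprod.lift (c • 𝟙 X) (e • 𝟙 X))) := by
  set Δ : K := a * e - b * c with hΔ
  refine ⟨biprod.desc (biprod.lift ((Δ⁻¹ * e) • 𝟙 X) ((Δ⁻¹ * (-b)) • 𝟙 X))
      (biprod.lift ((Δ⁻¹ * (-c)) • 𝟙 X) ((Δ⁻¹ * a) • 𝟙 X)), ?_, ?_⟩ <;>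
  · apply biprod.hom_ext' <;> apply biprod.hom_ext <;>
    · simp only [biprod.lift_desc, Category.assoc, biprod.inl_desc_assoc,
        biprod.inr_desc_assoc, Linear.smul_comp, Linear.comp_smul, smul_smul,
        Category.comp_id, Category.id_comp, biprod.lift_fst, biprod.lift_snd,
        Preadditive.add_comp, Preadditive.comp_add, biprod.inl_fst, biprod.inl_snd,
        biprod.inr_fst, biprod.inr_snd, smul_zero, add_zero, zero_add,
        ← neg_smul, ← add_smul]
      first
        | (apply aux_smul_id_zero; ring)
        | (apply aux_smul_id_eq; field_simp; rw [hΔ]; ring)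

/-- Splitting lemma: a section of `β` gives `E ≅ E' ⊞ E'`. -/
lemma aux_split {E' E : C} (α : E' ⟶ E) (β : E ⟶ E') (w : α ≫ β = 0)
    (hses : (ShortComplex.mk α β w).ShortExact) (s : E' ⟶ E) (hs : s ≫ β = 𝟙 E') :
    IsIso (biprod.desc α s) := by
  have := hses.mono_f
  obtain ⟨r, hr⟩ := hses.exact.lift' (𝟙 E - β ≫ s) (by simp [hs, w])
  refine ⟨biprod.lift r β, ?_, ?_⟩
  · apply biprod.hom_ext' <;> apply biprod.hom_ext <;>
      simp only [biprod.inl_desc_assoc, biprod.inr_desc_assoc, Category.assoc,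
        biprod.lift_fst, biprod.lift_snd, biprod.inl_fst, biprod.inr_snd,
        biprod.inl_snd, biprod.inr_fst, Category.comp_id, Category.id_comp]
    · rw [← cancel_mono α, Category.assoc, hr]
      simp [Preadditive.comp_sub, reassoc_of% w]
    · exact w
    · rw [← cancel_mono α, Category.assoc, hr]
      simp [Preadditive.comp_sub, reassoc_of% hs]
    · exact hs
  · simp [biprod.lift_desc, hr]
end

/-- Let `C` be a `K`-linear abelian category, `E'` a simple object with
scalar endomorphisms (`End E' = K`), and `E` an object of length 2 with both
composition factors `E'`, i.e. fitting in a short exact sequence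
`0 → E' → E → E' → 0`.  If `ι₁, ι₂ : E' ⟶ E` are monomorphisms with `ι₂` not a scalar
multiple of `ι₁`, then `(ι₁, ι₂) : E' ⊕ E' ⟶ E` is an isomorphism. -/
theorem stmt_8 {C : Type*} [Category C] [Abelian C]
    {K : Type*} [Field K] [Linear K C]
    (E' E : C) [Simple E']
    (hEnd : ∀ g : E' ⟶ E', ∃ c : K, g = c • 𝟙 E')
    (α : E' ⟶ E) (β : E ⟶ E') (w : α ≫ β = 0)
    (hses : (ShortComplex.mk α β w).ShortExact)
    (ι₁ ι₂ : E' ⟶ E) [Mono ι₁] [Mono ι₂]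
    (hindep : ∀ c : K, ι₂ ≠ c • ι₁) :
    IsIso (Limits.biprod.desc ι₁ ι₂) := by
  have := hses.mono_f
  obtain ⟨c₁, hc₁⟩ := hEnd (ι₁ ≫ β)
  obtain ⟨c₂, hc₂⟩ := hEnd (ι₂ ≫ β)
  by_cases h1 : c₁ = 0
  · -- ι₁ factors through α
    obtain ⟨u, hu⟩ := hses.exact.lift' ι₁ (by simp [hc₁, h1])
    obtain ⟨d, hd⟩ := hEnd u
    have hdne : d ≠ 0 := by
      rintro rfl
      have hz : ι₁ = 0 := by rw [← hu, hd]; simp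
      exact id_nonzero E' (by rw [← cancel_mono ι₁]; simp [hz])
    have h2 : c₂ ≠ 0 := by
      rintro rfl
      obtain ⟨v, hv⟩ := hses.exact.lift' ι₂ (by simp [hc₂])
      obtain ⟨d₂, hd₂⟩ := hEnd v
      refine hindep (d₂ * d⁻¹) ?_
      rw [← hu, ← hv, hd, hd₂]
      simp only [Linear.smul_comp, smul_smul, Category.id_comp]
      rw [mul_assoc, inv_mul_cancel₀ hdne, mul_one]
    set s : E' ⟶ E := c₂⁻¹ • ι₂ with hsdef
    have hs : s ≫ β = 𝟙 E' := by
      rw [hsdef, Linear.smul_comp, hc₂, smul_smul, inv_mul_cancel₀ h2, one_smul]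
    have hsplit := aux_split α β w hses s hs
    have hmat := aux_matrix_iso E' d (0 : K) (0 : K) c₂
      (by simpa using mul_ne_zero hdne h2)
    have heq : Limits.biprod.desc ι₁ ι₂ =
        (biprod.desc (biprod.lift (d • 𝟙 E') ((0:K) • 𝟙 E'))
          (biprod.lift ((0:K) • 𝟙 E') (c₂ • 𝟙 E'))) ≫ biprod.desc α s := by
      apply biprod.hom_ext'
      · simp only [biprod.inl_desc, biprod.inl_desc_assoc, biprod.lift_desc,
          Linear.smul_comp, Category.id_comp, zero_smul, add_zero, smul_zero, zero_comp, zero_add]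
        rw [← hu, hd]; simp
      · simp only [biprod.inr_desc, biprod.inr_desc_assoc, biprod.lift_desc,
          Linear.smul_comp, Category.id_comp, zero_smul, zero_add, smul_zero, zero_comp, add_zero]
        rw [hsdef, smul_smul, mul_inv_cancel₀ h2, one_smul]
    rw [heq]; infer_instance
  · -- c₁ ≠ 0
    set ψ : E' ⟶ E := ι₂ - (c₂ * c₁⁻¹) • ι₁ with hψ
    have hψβ : ψ ≫ β = 0 := by
      rw [hψ, Preadditive.sub_comp, Linear.smul_comp, hc₁, hc₂, smul_smul]
      rw [mul_assoc, inv_mul_cancel₀ h1, mul_one, sub_self]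
    obtain ⟨u, hu⟩ := hses.exact.lift' ψ hψβ
    obtain ⟨d, hd⟩ := hEnd u
    have hdne : d ≠ 0 := by
      rintro rfl
      have hz : ψ = 0 := by rw [← hu, hd]; simp
      refine hindep (c₂ * c₁⁻¹) ?_
      rw [hψ] at hz
      linear_combination (norm := abel) hz
    set s : E' ⟶ E := c₁⁻¹ • ι₁ with hsdef
    have hs : s ≫ β = 𝟙 E' := by
      rw [hsdef, Linear.smul_comp, hc₁, smul_smul, inv_mul_cancel₀ h1, one_smul]
    have hsplit := aux_split α β w hses s hs
    have hmat := aux_matrix_iso E' (0 : K) c₁ d c₂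
      (by simpa using mul_ne_zero h1 hdne)
    have heq : Limits.biprod.desc ι₁ ι₂ =
        (biprod.desc (biprod.lift ((0:K) • 𝟙 E') (c₁ • 𝟙 E'))
          (biprod.lift (d • 𝟙 E') (c₂ • 𝟙 E'))) ≫ biprod.desc α s := by
      apply biprod.hom_ext'
      · simp only [biprod.inl_desc, biprod.inl_desc_assoc, biprod.lift_desc,
          Linear.smul_comp, Category.id_comp, zero_smul, zero_add, smul_zero, zero_comp, add_zero]
        rw [hsdef, smul_smul, mul_inv_cancel₀ h1, one_smul]
      · simp only [biprod.inr_desc, biprod.inr_desc_assoc, biprod.lift_desc,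
          Linear.smul_comp, Category.id_comp]
        have hα : d • α = ψ := by
          rw [← hu, hd]; simp
        rw [hα, hψ, hsdef, smul_smul]
        abel
    rw [heq]; infer_instance
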